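/- arXiv:2301.07409 — 2 statements merged into one kernel-verified Lean document; each statement's English description precedes it below -/
import Mathlib

section
/- For α > 0 and pairs (n,m), (n',m') ∈ ℤ², the 2D basis functions V_{nm}^α(r,θ) = R_n^α(r) A_m(θ) with harmonic radial part R_n^α(r) = √(α r^{α-2}/(2π)) exp(i 2nπ r^α) and angular part A_m(θ) = exp(imθ) are orthonormal on the unit disk in polar coordinates with weight r: ∫₀^{2π} ∫₀¹ V_{nm}^α(r,θ) conj(V_{n'm'}^α(r,θ)) r dr dθ = δ_{nn'} δ_{mm'}. -/
open MeasureTheory Real Complex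

/-- 2D basis function `V_{nm}^α(r,θ) = R_n^α(r) A_m(θ)` with harmonic radial part. -/
noncomputable def basisV (α : ℝ) (n m : ℤ) (r θ : ℝ) : ℂ :=
  ((Real.sqrt (α * r ^ (α - 2) / (2 * Real.pi)) : ℂ) *
      Complex.exp (Complex.I * 2 * n * Real.pi * (r ^ α : ℝ))) *
    Complex.exp (Complex.I * m * θ)

/-!
The integrand separates as a radial factor times an angular factor. The angular integral is the
orthogonality of `e^{imθ}` over a period. In the radial integral the weight `α r^{α-1} / (2π)`
(from `|R_n^α|^2 r`) is the Jacobian of `u = r^α`, so it becomes `(2π)⁻¹ ∫₀¹ e^{2πi(n-n')u} du`.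
-/

open Set ComplexConjugate

theorem integral_exp_mul_of_exp_eq_one {c : ℂ} {b : ℝ} (h : Complex.exp (c * b) = 1) :
    ∫ x in (0:ℝ)..b, Complex.exp (c * x) = if c = 0 then (b : ℂ) else 0 := by
  split_ifs with hc
  · simp [hc]
  · simp [integral_exp_mul_complex hc, h]

theorem integral_comp_rpow_zero_one {E : Type*} [NormedAddCommGroup E] [NormedSpace ℝ E]
    [CompleteSpace E] {α : ℝ} (hα : 0 < α) (g : ℝ → E) :
    ∫ x in (0:ℝ)..1, (α * x ^ (α - 1)) • g (x ^ α) = ∫ u in (0:ℝ)..1, g u := by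
  have hunit : Ioo (min (0:ℝ) 1) (max 0 1) = Ioo 0 1 := by simp
  have hderiv : ∀ x ∈ Ioo (min (0:ℝ) 1) (max 0 1), HasDerivAt (· ^ α) (α * x ^ (α - 1)) x :=
    fun x hx => Real.hasDerivAt_rpow_const (Or.inl (hunit ▸ hx).1.ne')
  have := intervalIntegral.integral_deriv_smul_comp_of_deriv_nonneg (g := g)
    (continuous_id.rpow_const fun _ => Or.inr hα.le).continuousOn hderiv
    (fun x hx => mul_nonneg hα.le (Real.rpow_nonneg (hunit ▸ hx).1.le _))
  simpa [Real.zero_rpow hα.ne'] using this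

noncomputable def harmonicRadial (α : ℝ) (n : ℤ) (r : ℝ) : ℂ :=
  (Real.sqrt (α * r ^ (α - 2) / (2 * π)) : ℂ) * Complex.exp (I * 2 * n * π * (r ^ α : ℝ))

noncomputable def angularMode (m : ℤ) (θ : ℝ) : ℂ :=
  Complex.exp (I * m * θ)

theorem basisV_eq_harmonicRadial_mul_angularMode (α : ℝ) (n m : ℤ) (r θ : ℝ) :
    basisV α n m r θ = harmonicRadial α n r * angularMode m θ :=
  rfl

theorem angularMode_mul_conj (m m' : ℤ) (θ : ℝ) :
    angularMode m θ * conj (angularMode m' θ) = angularMode (m - m') θ := by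
  simp only [angularMode, ← Complex.exp_conj, ← Complex.exp_add, map_mul, conj_I, map_intCast,
    conj_ofReal]
  push_cast
  ring_nf

theorem integral_angularMode (k : ℤ) :
    ∫ θ in (0:ℝ)..2 * π, angularMode k θ = if k = 0 then (2 * π : ℂ) else 0 := by
  have hperiod : Complex.exp (I * k * ((2 * π : ℝ) : ℂ)) = 1 := by
    rw [← Complex.exp_int_mul_two_pi_mul_I k]
    push_cast
    ring_nf
  simp [angularMode, integral_exp_mul_of_exp_eq_one hperiod]

theorem integral_angularMode_mul_conj (m m' : ℤ) :
    ∫ θ in (0:ℝ)..2 * π, angularMode m θ * conj (angularMode m' θ)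
      = if m = m' then (2 * π : ℂ) else 0 := by
  simp_rw [angularMode_mul_conj, integral_angularMode, sub_eq_zero]

theorem harmonicRadial_mul_conj_mul_self {α : ℝ} (hα : 0 ≤ α) (n n' : ℤ) {r : ℝ} (hr : 0 < r) :
    harmonicRadial α n r * conj (harmonicRadial α n' r) * r
      = (2 * π : ℂ)⁻¹ *
          (α * r ^ (α - 1)) • Complex.exp (I * 2 * (n - n' : ℤ) * π * (r ^ α : ℝ)) := by
  have hweight : (α * r ^ (α - 2) / (2 * π)) * r = (2 * π)⁻¹ * (α * r ^ (α - 1)) := by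
    rw [show α - 1 = α - 2 + 1 by ring, Real.rpow_add_one hr.ne']
    ring
  have hsqrt := Real.mul_self_sqrt (show 0 ≤ α * r ^ (α - 2) / (2 * π) by positivity)
  simp only [harmonicRadial, map_mul, conj_ofReal, ← Complex.exp_conj, conj_I, map_intCast,
    map_ofNat, Complex.real_smul]
  calc _ = ((√(α * r ^ (α - 2) / (2 * π)) * √(α * r ^ (α - 2) / (2 * π)) * r : ℝ) : ℂ) *
          (Complex.exp (I * 2 * n * π * (r ^ α : ℝ)) *
            Complex.exp (-I * 2 * n' * π * (r ^ α : ℝ))) := by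
        push_cast; ring
    _ = _ := by
        rw [hsqrt, hweight, ← Complex.exp_add]
        push_cast
        ring_nf

theorem integral_harmonicRadial_mul_conj_mul_self {α : ℝ} (hα : 0 < α) (n n' : ℤ) :
    ∫ r in (0:ℝ)..1, harmonicRadial α n r * conj (harmonicRadial α n' r) * r
      = if n = n' then (2 * π : ℂ)⁻¹ else 0 := by
  have hperiod : Complex.exp (I * 2 * (n - n' : ℤ) * π * ((1 : ℝ) : ℂ)) = 1 := by
    rw [← Complex.exp_int_mul_two_pi_mul_I (n - n')]
    push_cast
    ring_nf
  have hfreq : I * 2 * ((n - n' : ℤ) : ℂ) * π = 0 ↔ n = n' := by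
    simp [Real.pi_ne_zero, sub_eq_zero]
  calc _ = ∫ r in (0:ℝ)..1, (2 * π : ℂ)⁻¹ *
          (α * r ^ (α - 1)) • Complex.exp (I * 2 * (n - n' : ℤ) * π * (r ^ α : ℝ)) := by
        refine intervalIntegral.integral_congr_ae (.of_forall fun r hr => ?_)
        rw [uIoc_of_le zero_le_one] at hr
        exact harmonicRadial_mul_conj_mul_self hα.le n n' hr.1
    _ = (2 * π : ℂ)⁻¹ * ∫ u in (0:ℝ)..1, Complex.exp (I * 2 * (n - n' : ℤ) * π * u) := by
        rw [intervalIntegral.integral_const_mul, integral_comp_rpow_zero_one hα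
          (fun u : ℝ => Complex.exp (I * 2 * (n - n' : ℤ) * π * u))]
    _ = _ := by
        rw [integral_exp_mul_of_exp_eq_one hperiod]
        simp only [hfreq]
        split_ifs <;> simp

/-- Orthonormality of the harmonic 2D basis functions on the unit disk with weight `r`. -/
theorem basisV_orthonormal (α : ℝ) (hα : 0 < α) (n m n' m' : ℤ) :
    ∫ θ in (0:ℝ)..(2 * Real.pi), ∫ r in (0:ℝ)..1,
        basisV α n m r θ * (starRingEnd ℂ) (basisV α n' m' r θ) * (r : ℂ)
      = (if n = n' then 1 else 0) * (if m = m' then 1 else 0) := by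
  have hseparate : ∀ r θ, basisV α n m r θ * conj (basisV α n' m' r θ) * r
      = harmonicRadial α n r * conj (harmonicRadial α n' r) * r
        * (angularMode m θ * conj (angularMode m' θ)) := by
    intro r θ
    simp only [basisV_eq_harmonicRadial_mul_angularMode, map_mul]
    ring
  simp_rw [hseparate, intervalIntegral.integral_mul_const, intervalIntegral.integral_const_mul,
    integral_harmonicRadial_mul_conj_mul_self hα, integral_angularMode_mul_conj]
  have hπ : (2 * π : ℂ) ≠ 0 := by exact_mod_cast Real.two_pi_pos.ne'
  split_ifs <;> simp only [inv_mul_cancel₀ hπ, mul_zero, zero_mul, mul_one]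
end

section
/- Let f : ℝ² → ℝ have compact support and be integrable, and let p ≥ 0 be an integer. Then for every angle θ, the p-th radial moment of the Radon transform equals the corresponding directional moment of the image: ∫_ℝ r^p R_f(r,θ) dr = ∫∫_{ℝ²} f(x,y) (x cos θ + y sin θ)^p dx dy. -/
/-!
In the coordinates `(r, t)` rotated by `θ`, the projection `x cos θ + y sin θ` becomes `r`. The
rotation has determinant one, so it preserves Lebesgue measure, and Fubini's theorem in the rotated
coordinates integrates out `t` first, which produces the Radon transform. This works for any
weight `g (x cos θ + y sin θ)` making the integrand integrable; compact support of `f` ensures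
this for `g = (· ^ p)`.
-/

open MeasureTheory Real

noncomputable def radonTransform (f : ℝ × ℝ → ℝ) (r θ : ℝ) : ℝ :=
  ∫ t : ℝ, f (r * Real.cos θ - t * Real.sin θ, r * Real.sin θ + t * Real.cos θ)

theorem MeasureTheory.Integrable.mul_continuous_of_hasCompactSupport {X R : Type*}
    [TopologicalSpace X] [T2Space X] [MeasurableSpace X] [OpensMeasurableSpace X]
    {μ : Measure X} [NormedRing R] [SecondCountableTopologyEither X R]
    {f g : X → R} (hf : Integrable f μ) (hsupp : HasCompactSupport f) (hg : Continuous g) :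
    Integrable (fun x => f x * g x) μ := by
  refine (integrableOn_iff_integrable_of_support_subset ?_).1
    (hf.integrableOn.mul_continuousOn hg.continuousOn hsupp)
  exact (Function.support_mul_subset_left f g).trans (subset_tsupport f)

noncomputable def planeRotation (θ : ℝ) : (ℝ × ℝ) ≃ₗ[ℝ] ℝ × ℝ where
  toFun w := (w.1 * cos θ - w.2 * sin θ, w.1 * sin θ + w.2 * cos θ)
  invFun z := (z.1 * cos θ + z.2 * sin θ, z.2 * cos θ - z.1 * sin θ)
  map_add' v w := by ext <;> simp only [Prod.fst_add, Prod.snd_add] <;> ring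
  map_smul' c w := by ext <;> simp only [Prod.smul_fst, Prod.smul_snd, smul_eq_mul,
    RingHom.id_apply] <;> ring
  left_inv w := by
    ext
    · linear_combination w.1 * sin_sq_add_cos_sq θ
    · linear_combination w.2 * sin_sq_add_cos_sq θ
  right_inv z := by
    ext
    · linear_combination z.1 * sin_sq_add_cos_sq θ
    · linear_combination z.2 * sin_sq_add_cos_sq θ

@[simp]
theorem planeRotation_apply (θ : ℝ) (w : ℝ × ℝ) :
    planeRotation θ w = (w.1 * cos θ - w.2 * sin θ, w.1 * sin θ + w.2 * cos θ) := rfl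

@[simp]
theorem planeRotation_symm_apply (θ : ℝ) (z : ℝ × ℝ) :
    (planeRotation θ).symm z = (z.1 * cos θ + z.2 * sin θ, z.2 * cos θ - z.1 * sin θ) := rfl

theorem det_planeRotation (θ : ℝ) :
    LinearMap.det (planeRotation θ : (ℝ × ℝ) →ₗ[ℝ] ℝ × ℝ) = 1 := by
  rw [← LinearMap.det_toMatrix (Module.Basis.finTwoProd ℝ), Matrix.det_fin_two]
  simp [LinearMap.toMatrix_apply, Module.Basis.coe_finTwoProd_repr]
  linear_combination sin_sq_add_cos_sq θ

theorem measurePreserving_planeRotation (θ : ℝ) :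
    MeasurePreserving (planeRotation θ) (volume : Measure (ℝ × ℝ)) volume := by
  refine ⟨(planeRotation θ).toContinuousLinearEquiv.continuous.measurable, ?_⟩
  have h := Measure.map_linearMap_addHaar_eq_smul_addHaar (volume : Measure (ℝ × ℝ))
    (f := (planeRotation θ : (ℝ × ℝ) →ₗ[ℝ] ℝ × ℝ)) (by simp [det_planeRotation])
  simpa [det_planeRotation] using h

theorem integral_mul_radonTransform (f : ℝ × ℝ → ℝ) (g : ℝ → ℝ) (θ : ℝ)
    (hfg : Integrable fun z : ℝ × ℝ => f z * g (z.1 * cos θ + z.2 * sin θ)) :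
    ∫ r : ℝ, g r * radonTransform f r θ
      = ∫ z : ℝ × ℝ, f z * g (z.1 * cos θ + z.2 * sin θ) := by
  set R := (planeRotation θ).toContinuousLinearEquiv.toHomeomorph.toMeasurableEquiv
  have hR : MeasurePreserving R volume volume := measurePreserving_planeRotation θ
  have hproj : ∀ z : ℝ × ℝ, z.1 * cos θ + z.2 * sin θ = (R.symm z).1 := fun z => rfl
  have hrot : Integrable (fun w : ℝ × ℝ => f (R w) * g w.1) (volume.prod volume) := by
    rw [← Measure.volume_eq_prod]
    simp only [hproj] at hfg
    simpa only [Function.comp_def, R.symm_apply_apply] using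
      (hR.integrable_comp_emb R.measurableEmbedding).2 hfg
  calc ∫ r : ℝ, g r * radonTransform f r θ
      = ∫ r : ℝ, ∫ t : ℝ, f (R (r, t)) * g r := by
        simp only [radonTransform, ← integral_mul_const, mul_comm (g _)]; rfl
    _ = ∫ w : ℝ × ℝ, f (R w) * g w.1 := by
        rw [Measure.volume_eq_prod, integral_prod _ hrot]
    _ = ∫ z : ℝ × ℝ, f z * g (z.1 * cos θ + z.2 * sin θ) := by
        simp only [hproj]
        simpa using hR.integral_comp' (fun z => f z * g (R.symm z).1)

/-- Projection-moment theorem: radial moments of the Radon transform equal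
directional moments of the image. -/
theorem radon_projection_moment (f : ℝ × ℝ → ℝ)
    (hf : Integrable f) (hsupp : HasCompactSupport f) (p : ℕ) (θ : ℝ) :
    ∫ r : ℝ, r ^ p * radonTransform f r θ
      = ∫ z : ℝ × ℝ, f z * (z.1 * Real.cos θ + z.2 * Real.sin θ) ^ p :=
  integral_mul_radonTransform f (· ^ p) θ
    (hf.mul_continuous_of_hasCompactSupport hsupp (by fun_prop))
end
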